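/- Assume 0 < m < 1, 1 < r < 2/m, c > 0, and let p < q be coprime positive integers. Let γ_s < γ_w in (0,1) both satisfy (a + b*γ + a*γ^2)^q = γ^{q-p}. Let φ : ℤ → ℝ satisfy (G^{(q)} φ)_i = φ_{i-p} for all i, and suppose there are integers 0 = i_0 ≤ i_1 ≤ … ≤ i_q = p and a constant K > 0 such that for each t ∈ {0, …, q-1}: (G^{(t)} φ)_i = 1 for all i ≤ i_t, 0 < (G^{(t)} φ)_i ≤ K*γ_s^{i - i_t} for all i > i_t, and μ(G^{(t)} φ)_i ≠ c for all i ∈ ℤ. Define the linear operator L = S^{(p)} ∘ J_{G^{(q-1)} φ} ∘ ⋯ ∘ J_{G^{(1)} φ} ∘ J_φ on functions η : ℤ → ℂ. Then there exists γ̄ ∈ (0,1) such that for every λ ∈ ℂ with |λ| ≥ 1, any η : ℤ → ℂ satisfying L η = λ η, sup_{i ≤ 0} |η_i| < ∞ and sup_{i > 0} |η_i|*γ̄^{-i} < ∞ must be identically zero. That is, the linearization of S^{(p)} ∘ G^{(q)} about the locked front has no eigenvalue of modulus at least one in the exponentially weighted space X_γ̄. -/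

import Mathlib

/-!
Write `H(γ) = a + bγ + aγ²`. Dropping the cutoff in `J_u` only increases absolute values, so in
the sup norm with weight `γ^i` each `J_u` has norm at most `H(γ)/γ`, and `L` norm at most
`θ(γ) = (H(γ)/γ)^q γ^p`. The dispersion relation `H(γ)^q = γ^(q-p)` says `θ = 1` at `γ_s` and at
`γ_w`; since `H(√(xy))² < H(x) H(y)` for `x ≠ y` (Cauchy–Schwarz), `θ < 1` at the geometric mean
`γ̄ = √(γ_s γ_w)`. An eigenvector with `|λ| ≥ 1` of finite weighted norm then has norm at most `θ`
times its own norm, so it vanishes.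
-/

/-- The post-migration values `μ(u)_i = (m/2) u_{i-1} + (1-m) u_i + (m/2) u_{i+1}`. -/
noncomputable def mu (m : ℝ) (u : ℤ → ℝ) : ℤ → ℝ :=
  fun i => m / 2 * u (i - 1) + (1 - m) * u i + m / 2 * u (i + 1)

/-- The piecewise linear reproduction function `g(u) = r u` for `u < c`, `g(u) = 1` for `u ≥ c`. -/
noncomputable def g (r c u : ℝ) : ℝ := if u < c then r * u else 1

/-- The generational map `G`: migration followed by reproduction. -/
noncomputable def G (r c m : ℝ) (u : ℤ → ℝ) : ℤ → ℝ :=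
  fun i => g r c (mu m u i)

/-- The linearization `J_u` of `G` at a state `u` with `μ(u)_i ≠ c` for all `i`:
`(J_u η)_i = r ((m/2) η_{i-1} + (1-m) η_i + (m/2) η_{i+1})` when `μ(u)_i < c`, and
`(J_u η)_i = 0` when `μ(u)_i > c`. -/
noncomputable def J (r c m : ℝ) (u : ℤ → ℝ) (η : ℤ → ℂ) : ℤ → ℂ :=
  fun i =>
    if mu m u i < c then
      (r : ℂ) * (((m : ℂ) / 2) * η (i - 1) + (1 - (m : ℂ)) * η i + ((m : ℂ) / 2) * η (i + 1))
    else 0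

/-- The composition `J_{G^{(t-1)} φ} ∘ ⋯ ∘ J_{G^{(1)} φ} ∘ J_φ`. -/
noncomputable def Jchain (r c m : ℝ) (φ : ℤ → ℝ) : ℕ → (ℤ → ℂ) → (ℤ → ℂ)
  | 0 => fun η => η
  | t + 1 => fun η => J r c m ((G r c m)^[t] φ) (Jchain r c m φ t η)

/-- The linearization `L = S^{(p)} ∘ J_{G^{(q-1)} φ} ∘ ⋯ ∘ J_φ` of `S^{(p)} ∘ G^{(q)}` at `φ`. -/
noncomputable def L (r c m : ℝ) (p q : ℕ) (φ : ℤ → ℝ) (η : ℤ → ℂ) : ℤ → ℂ :=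
  fun i => Jchain r c m φ q η (i + p)

def dispersion (a b γ : ℝ) : ℝ := a + b * γ + a * γ ^ 2

theorem dispersion_nonneg {a b γ : ℝ} (ha : 0 ≤ a) (hb : 0 ≤ b) (hγ : 0 ≤ γ) :
    0 ≤ dispersion a b γ := by
  unfold dispersion; positivity

theorem dispersion_sqrt_mul_sq_lt {a b x y : ℝ} (ha : 0 < a) (hb : 0 ≤ b) (hx : 0 ≤ x)
    (hy : 0 ≤ y) (hxy : x ≠ y) :
    dispersion a b √(x * y) ^ 2 < dispersion a b x * dispersion a b y := by
  obtain ⟨s, hs, rfl⟩ : ∃ s, 0 ≤ s ∧ s ^ 2 = x := ⟨√x, Real.sqrt_nonneg x, Real.sq_sqrt hx⟩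
  obtain ⟨t, ht, rfl⟩ : ∃ t, 0 ≤ t ∧ t ^ 2 = y := ⟨√y, Real.sqrt_nonneg y, Real.sq_sqrt hy⟩
  rw [← mul_pow, Real.sqrt_sq (mul_nonneg hs ht)]
  have hst : s ^ 2 - t ^ 2 ≠ 0 := sub_ne_zero.mpr hxy
  have key : dispersion a b (s ^ 2) * dispersion a b (t ^ 2) - dispersion a b (s * t) ^ 2 =
      a * b * (s - t) ^ 2 * (1 + (s * t) ^ 2) + a ^ 2 * (s ^ 2 - t ^ 2) ^ 2 := by
    unfold dispersion; ring
  have hab : 0 ≤ a * b * (s - t) ^ 2 * (1 + (s * t) ^ 2) := by positivity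
  have ha2 : 0 < a ^ 2 * (s ^ 2 - t ^ 2) ^ 2 := by positivity
  linarith

theorem dispersion_sqrt_mul_pow_lt {a b x y : ℝ} {q k : ℕ} (ha : 0 < a) (hb : 0 ≤ b)
    (hx : 0 ≤ x) (hy : 0 ≤ y) (hxy : x ≠ y) (hq : q ≠ 0)
    (hdx : dispersion a b x ^ q = x ^ k) (hdy : dispersion a b y ^ q = y ^ k) :
    dispersion a b √(x * y) ^ q < √(x * y) ^ k := by
  refine lt_of_pow_lt_pow_left₀ 2 (by positivity) ?_
  calc (dispersion a b √(x * y) ^ q) ^ 2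
      = (dispersion a b √(x * y) ^ 2) ^ q := pow_right_comm _ _ _
    _ < (dispersion a b x * dispersion a b y) ^ q :=
      pow_lt_pow_left₀ (dispersion_sqrt_mul_sq_lt ha hb hx hy hxy) (sq_nonneg _) hq
    _ = (√(x * y) ^ k) ^ 2 := by
      rw [mul_pow, hdx, hdy, ← mul_pow, ← pow_mul, mul_comm k, pow_mul,
        Real.sq_sqrt (mul_nonneg hx hy)]

def WeightedBound (γ M : ℝ) (η : ℤ → ℂ) : Prop := ∀ i, ‖η i‖ ≤ M * γ ^ i

namespace WeightedBound

variable {γ M : ℝ} {η : ℤ → ℂ}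

theorem nonneg (h : WeightedBound γ M η) : 0 ≤ M := by
  simpa using (norm_nonneg _).trans (h 0)

theorem J {r c m : ℝ} (hr : 0 ≤ r) (hm0 : 0 ≤ m) (hm1 : m ≤ 1) (hγ : 0 < γ) (u : ℤ → ℝ)
    (h : WeightedBound γ M η) :
    WeightedBound γ (M * (dispersion (r * m / 2) (r * (1 - m)) γ / γ)) (J r c m u η) := by
  intro j
  have hM := h.nonneg
  unfold _root_.J
  split_ifs
  · calc ‖(r : ℂ) * ((m : ℂ) / 2 * η (j - 1) + (1 - (m : ℂ)) * η j + (m : ℂ) / 2 * η (j + 1))‖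
        ≤ r * (m / 2 * ‖η (j - 1)‖ + (1 - m) * ‖η j‖ + m / 2 * ‖η (j + 1)‖) := by
          have h1m : ‖1 - (m : ℂ)‖ = 1 - m := by
            rw [← Complex.ofReal_one, ← Complex.ofReal_sub, Complex.norm_real,
              Real.norm_of_nonneg (by linarith)]
          rw [norm_mul, Complex.norm_real, Real.norm_of_nonneg hr]
          gcongr
          refine (norm_add₃_le ..).trans_eq ?_
          simp only [norm_mul, norm_div, Complex.norm_real, Real.norm_of_nonneg hm0, h1m,
            Complex.norm_ofNat]
      _ ≤ r * (m / 2 * (M * γ ^ (j - 1)) + (1 - m) * (M * γ ^ j)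
            + m / 2 * (M * γ ^ (j + 1))) := by
          have : 0 ≤ 1 - m := by linarith
          gcongr <;> exact h _
      _ = M * (dispersion (r * m / 2) (r * (1 - m)) γ / γ) * γ ^ j := by
          rw [zpow_sub_one₀ hγ.ne', zpow_add_one₀ hγ.ne', dispersion]
          field_simp
  · rw [norm_zero]
    have := dispersion_nonneg (by positivity : 0 ≤ r * m / 2)
      (mul_nonneg hr (by linarith : 0 ≤ 1 - m)) hγ.le
    positivity

theorem Jchain {r c m : ℝ} (hr : 0 ≤ r) (hm0 : 0 ≤ m) (hm1 : m ≤ 1) (hγ : 0 < γ) (φ : ℤ → ℝ)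
    (h : WeightedBound γ M η) (t : ℕ) :
    WeightedBound γ (M * (dispersion (r * m / 2) (r * (1 - m)) γ / γ) ^ t)
      (Jchain r c m φ t η) := by
  induction t with
  | zero => simpa [_root_.Jchain] using h
  | succ t ih =>
    rw [pow_succ, ← mul_assoc]
    exact ih.J hr hm0 hm1 hγ _

theorem L {r c m : ℝ} (hr : 0 ≤ r) (hm0 : 0 ≤ m) (hm1 : m ≤ 1) (hγ : 0 < γ) (p q : ℕ)
    (φ : ℤ → ℝ) (h : WeightedBound γ M η) :
    WeightedBound γ (M * ((dispersion (r * m / 2) (r * (1 - m)) γ / γ) ^ q * γ ^ p))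
      (L r c m p q φ η) := by
  intro i
  calc ‖_root_.L r c m p q φ η i‖
      ≤ M * (dispersion (r * m / 2) (r * (1 - m)) γ / γ) ^ q * γ ^ (i + p) :=
        h.Jchain hr hm0 hm1 hγ φ q (i + p)
    _ = _ := by rw [zpow_add₀ hγ.ne', zpow_natCast]; ring

theorem of_bounded (hγ0 : 0 < γ) (hγ1 : γ ≤ 1) (h₁ : ∃ C₁ : ℝ, ∀ i : ℤ, i ≤ 0 → ‖η i‖ ≤ C₁)
    (h₂ : ∃ C₂ : ℝ, ∀ i : ℤ, 0 < i → ‖η i‖ * γ ^ (-i) ≤ C₂) :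
    ∃ M, WeightedBound γ M η := by
  obtain ⟨C₁, hC₁⟩ := h₁
  obtain ⟨C₂, hC₂⟩ := h₂
  have hC₁0 : 0 ≤ C₁ := (norm_nonneg _).trans (hC₁ 0 le_rfl)
  refine ⟨max C₁ C₂, fun i => ?_⟩
  rcases le_or_gt i 0 with hi | hi
  · calc ‖η i‖ ≤ C₁ := hC₁ i hi
      _ ≤ max C₁ C₂ * 1 := by rw [mul_one]; exact le_max_left _ _
      _ ≤ max C₁ C₂ * γ ^ i :=
        mul_le_mul_of_nonneg_left (one_le_zpow_of_nonpos₀ hγ0 hγ1 hi) (by positivity)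
  · calc ‖η i‖ = ‖η i‖ * γ ^ (-i) * γ ^ i := by
          rw [mul_assoc, ← zpow_add₀ hγ0.ne', neg_add_cancel, zpow_zero, mul_one]
      _ ≤ max C₁ C₂ * γ ^ i := by
          gcongr
          exact (hC₂ i hi).trans (le_max_right _ _)

theorem eq_zero_of_contract {θ : ℝ} (hγ : 0 < γ) (hθ : θ < 1) (hbdd : ∃ M, WeightedBound γ M η)
    (hcontract : ∀ M, WeightedBound γ M η → WeightedBound γ (θ * M) η) : η = 0 := by
  have hiff : ∀ M, WeightedBound γ M η ↔ ∀ i, ‖η i‖ / γ ^ i ≤ M := fun M =>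
    forall_congr' fun i => (div_le_iff₀ (zpow_pos hγ i)).symm
  obtain ⟨M, hM⟩ := hbdd
  set M₀ := ⨆ i, ‖η i‖ / γ ^ i
  have hM₀ : WeightedBound γ M₀ η :=
    (hiff M₀).2 fun i => le_ciSup ⟨M, Set.forall_mem_range.2 ((hiff M).1 hM)⟩ i
  have hle : M₀ ≤ θ * M₀ := ciSup_le ((hiff _).1 (hcontract M₀ hM₀))
  have hM₀0 : M₀ ≤ 0 := by nlinarith [hM₀.nonneg]
  funext i
  exact norm_le_zero_iff.1 <| (hM₀ i).trans (mul_nonpos_of_nonpos_of_nonneg hM₀0 (by positivity))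

end WeightedBound

theorem div_pow_mul_pow_lt_one {d γ : ℝ} {p q : ℕ} (hγ : 0 < γ) (hpq : p ≤ q)
    (h : d ^ q < γ ^ (q - p)) : (d / γ) ^ q * γ ^ p < 1 := by
  have hγq : γ ^ q = γ ^ (q - p) * γ ^ p := by rw [← pow_add, Nat.sub_add_cancel hpq]
  rw [div_pow, hγq, ← div_div, div_mul_cancel₀ _ (pow_ne_zero _ hγ.ne')]
  exact (div_lt_one (pow_pos hγ _)).2 h

theorem stmt_18_general (r m c : ℝ) (hm0 : 0 < m) (hm1 : m < 1) (hr1 : 1 < r)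
    (p q : ℕ) (hpq : p < q)
    (γs γw : ℝ) (hγs : γs ∈ Set.Ioo (0 : ℝ) 1) (hγw : γw ∈ Set.Ioo (0 : ℝ) 1)
    (hsw : γs < γw)
    (heqs : (r * m / 2 + r * (1 - m) * γs + r * m / 2 * γs ^ 2) ^ q = γs ^ (q - p))
    (heqw : (r * m / 2 + r * (1 - m) * γw + r * m / 2 * γw ^ 2) ^ q = γw ^ (q - p))
    (φ : ℤ → ℝ) :
    ∃ γbar ∈ Set.Ioo (0 : ℝ) 1,
      ∀ lam : ℂ, 1 ≤ ‖lam‖ →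
        ∀ η : ℤ → ℂ,
          (∀ i : ℤ, L r c m p q φ η i = lam * η i) →
          (∃ C₁ : ℝ, ∀ i : ℤ, i ≤ 0 → ‖η i‖ ≤ C₁) →
          (∃ C₂ : ℝ, ∀ i : ℤ, 0 < i → ‖η i‖ * γbar ^ (-i) ≤ C₂) →
          ∀ i : ℤ, η i = 0 := by
  obtain ⟨hγs0, -⟩ := hγs
  obtain ⟨hγw0, hγw1⟩ := hγw
  have hr : 0 < r := by linarith
  set γ := √(γs * γw)
  have hγ0 : 0 < γ := Real.sqrt_pos.2 (mul_pos hγs0 hγw0)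
  have hγ1 : γ < 1 := (Real.sqrt_lt' one_pos).2 (by nlinarith)
  set θ := (dispersion (r * m / 2) (r * (1 - m)) γ / γ) ^ q * γ ^ p
  have hθ : θ < 1 := div_pow_mul_pow_lt_one hγ0 hpq.le <|
    dispersion_sqrt_mul_pow_lt (by positivity) (mul_nonneg hr.le (by linarith)) hγs0.le hγw0.le
      hsw.ne (by omega) heqs heqw
  refine ⟨γ, ⟨hγ0, hγ1⟩, fun lam hlam η heig h₁ h₂ => ?_⟩
  refine congrFun (WeightedBound.eq_zero_of_contract hγ0 hθ
    (WeightedBound.of_bounded hγ0 hγ1.le h₁ h₂) ?_)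
  intro M hM i
  calc ‖η i‖ ≤ ‖lam‖ * ‖η i‖ := le_mul_of_one_le_left (norm_nonneg _) hlam
    _ = ‖L r c m p q φ η i‖ := by rw [heig, norm_mul]
    _ ≤ θ * M * γ ^ i := by
      rw [mul_comm θ]
      exact hM.L hr.le hm0.le hm1.le hγ0 p q φ i

theorem stmt_18 (r m c : ℝ) (hm0 : 0 < m) (hm1 : m < 1) (hr1 : 1 < r) (hr2 : r < 2 / m)
    (hc : 0 < c)
    (p q : ℕ) (hp : 0 < p) (hpq : p < q) (hcop : Nat.Coprime p q)
    (γs γw : ℝ) (hγs : γs ∈ Set.Ioo (0 : ℝ) 1) (hγw : γw ∈ Set.Ioo (0 : ℝ) 1)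
    (hsw : γs < γw)
    (heqs : (r * m / 2 + r * (1 - m) * γs + r * m / 2 * γs ^ 2) ^ q = γs ^ (q - p))
    (heqw : (r * m / 2 + r * (1 - m) * γw + r * m / 2 * γw ^ 2) ^ q = γw ^ (q - p))
    (φ : ℤ → ℝ)
    (hfront : ∀ i : ℤ, (G r c m)^[q] φ i = φ (i - p))
    (idx : ℕ → ℤ) (hidx0 : idx 0 = 0) (hidxq : idx q = p)
    (hidxmono : ∀ t : ℕ, t < q → idx t ≤ idx (t + 1))
    (K : ℝ) (hK : 0 < K)
    (hcap : ∀ t : ℕ, t < q → ∀ i : ℤ, i ≤ idx t → (G r c m)^[t] φ i = 1)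
    (htail : ∀ t : ℕ, t < q → ∀ i : ℤ, idx t < i →
      0 < (G r c m)^[t] φ i ∧ (G r c m)^[t] φ i ≤ K * γs ^ (i - idx t))
    (hnc : ∀ t : ℕ, t < q → ∀ i : ℤ, mu m ((G r c m)^[t] φ) i ≠ c) :
    ∃ γbar ∈ Set.Ioo (0 : ℝ) 1,
      ∀ lam : ℂ, 1 ≤ ‖lam‖ →
        ∀ η : ℤ → ℂ,
          (∀ i : ℤ, L r c m p q φ η i = lam * η i) →
          (∃ C₁ : ℝ, ∀ i : ℤ, i ≤ 0 → ‖η i‖ ≤ C₁) →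
          (∃ C₂ : ℝ, ∀ i : ℤ, 0 < i → ‖η i‖ * γbar ^ (-i) ≤ C₂) →
          ∀ i : ℤ, η i = 0 :=
  stmt_18_general r m c hm0 hm1 hr1 p q hpq γs γw hγs hγw hsw heqs heqw φ
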